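/- arXiv:1401.5150 — 3 statements merged into one kernel-verified Lean document; each statement's English description precedes it below -/
import Mathlib

section
/- Define F_1 = P^+ D^{-1} L_k, where D^{-1} v(s) = ∫_{-1}^s v and P^+ is the degree-k left Gauss–Radau projection on [-1,1]. Then F_1 = -(L_k + L_{k-1})/(2k+1), and consequently F_1(-1) = 0 and ‖F_1‖_{L^∞([-1,1])} ≤ 2/(2k+1). -/
open Polynomial

/-- Legendre polynomial of degree `m` on `[-1,1]`, normalized so `L_m(1) = 1`. -/
noncomputable def leg (m : ℕ) : Polynomial ℝ :=
  Polynomial.C (((2 : ℝ) ^ m * Nat.factorial m)⁻¹) *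
    (fun p => Polynomial.derivative p)^[m] ((Polynomial.X ^ 2 - 1) ^ m)

/-- The antiderivative operator `D⁻¹ v (s) = ∫_{-1}^s v`. -/
noncomputable def Dinv (v : ℝ → ℝ) (s : ℝ) : ℝ := ∫ t in (-1 : ℝ)..s, v t

/-- Degree-`k` left Gauss–Radau projection on `[-1,1]`. -/
def IsRadauPos (k : ℕ) (v : ℝ → ℝ) (p : Polynomial ℝ) : Prop :=
  p.natDegree ≤ k ∧
  (∀ w : Polynomial ℝ, w.natDegree + 1 ≤ k →
    ∫ s in (-1 : ℝ)..1, (v s - p.eval s) * w.eval s = 0) ∧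
  p.eval (-1) = v (-1)

/-!
The candidate `-(L_k + L_{k-1})/(2k+1)` is checked directly. Rodrigues' formula gives
`L'_{k+1} - L'_{k-1} = (2k+1) L_k`, so `D⁻¹ L_k = (L_{k+1} - L_{k-1})/(2k+1)` (both sides vanish
at `-1` because `L_m(-1) = (-1)^m`), and the residual `D⁻¹ L_k - F₁` is a multiple of
`L_{k+1} + L_k`, orthogonal to all polynomials of degree `< k`. The projection is unique: the
difference `d` of two projections has degree `≤ k` and `d(-1) = 0`, so `d = (x+1) q` with
`deg q < k`, and orthogonality to `q` gives `∫ (x+1) q² = 0`. The bound follows from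
`|L_m| ≤ 1` on `[-1,1]`: by the Legendre equation, `m(m+1) L_m² + (1-x²) L_m'²` has derivative
`2x L_m'²`, so it is largest at `±1`, where it equals `m(m+1)`.
-/

open Polynomial Set MeasureTheory
open scoped Nat

namespace Polynomial

section CommRing

variable {R : Type*} [CommRing R]

theorem derivative_X_sq_sub_one_pow_succ (m : ℕ) :
    derivative ((X ^ 2 - 1 : R[X]) ^ (m + 1)) = C (2 * (m + 1) : R) * ((X ^ 2 - 1) ^ m * X) := by
  rw [derivative_pow]
  simp only [derivative_sub, derivative_X_pow, derivative_one, sub_zero, add_tsub_cancel_right,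
    map_mul, map_add, map_natCast, map_ofNat, map_one, Nat.cast_add, Nat.cast_one, Nat.cast_ofNat]
  ring

theorem iterate_derivative_succ_X_sq_sub_one_pow_succ (n m : ℕ) :
    derivative^[n + 1] ((X ^ 2 - 1 : R[X]) ^ (m + 1)) =
      C (2 * (m + 1) : R) * derivative^[n] ((X ^ 2 - 1) ^ m * X) := by
  rw [Function.iterate_succ_apply, derivative_X_sq_sub_one_pow_succ, iterate_derivative_C_mul]

theorem eval_iterate_derivative_pow_eq_zero {p : R[X]} {t : R} (ht : p.IsRoot t) {j m : ℕ}
    (hjm : j < m) : (derivative^[j] (p ^ m)).eval t = 0 := by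
  obtain ⟨r, hr⟩ := pow_sub_dvd_iterate_derivative_pow p m j
  rw [hr, eval_mul, eval_pow, ht.eq_zero, zero_pow (by omega), zero_mul]

theorem eval_iterate_derivative_X_sq_sub_one_pow {t : R} (ht : t ^ 2 = 1) (m : ℕ) :
    (derivative^[m] ((X ^ 2 - 1 : R[X]) ^ m)).eval t = (2 * t) ^ m * m ! := by
  have hroot : (X ^ 2 - 1 : R[X]).IsRoot t := by simp [ht]
  induction m with
  | zero => simp
  | succ m ih =>
    rw [iterate_derivative_succ_X_sq_sub_one_pow_succ, iterate_derivative_mul_X, eval_mul,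
      eval_add, eval_mul, ih, eval_smul, nsmul_eq_mul]
    rcases Nat.eq_zero_or_pos m with rfl | hm
    · simp
    · rw [eval_iterate_derivative_pow_eq_zero hroot (by omega : m - 1 < m)]
      simp only [eval_C, eval_X, mul_zero, add_zero, Nat.factorial_succ, Nat.cast_mul,
        Nat.cast_succ]
      ring

theorem derivative_derivative_X_sq_sub_one_pow (n : ℕ) :
    derivative (derivative ((X ^ 2 - 1 : R[X]) ^ (n + 2))) =
      C (2 * (n + 2) * (2 * n + 3) : R) * (X ^ 2 - 1) ^ (n + 1) +
        C (4 * (n + 1) * (n + 2) : R) * (X ^ 2 - 1) ^ n := by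
  rw [derivative_X_sq_sub_one_pow_succ, derivative_C_mul, derivative_mul,
    derivative_X_sq_sub_one_pow_succ]
  simp only [derivative_X, map_mul, map_add, map_natCast, map_ofNat, map_one, Nat.cast_add,
    Nat.cast_one]
  ring

theorem X_sq_sub_one_mul_iterate_derivative_add_two (m : ℕ) :
    (X ^ 2 - 1 : R[X]) * derivative^[m + 2] ((X ^ 2 - 1) ^ m) +
        2 * X * derivative^[m + 1] ((X ^ 2 - 1) ^ m) =
      C (m * (m + 1) : R) * derivative^[m] ((X ^ 2 - 1) ^ m) := by
  set q : R[X] := (X ^ 2 - 1) ^ m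
  have h₁ := iterate_derivative_succ_X_sq_sub_one_pow_succ (R := R) (m + 1) m
  have h₂ : (X ^ 2 - 1 : R[X]) ^ (m + 1) = q * X * X - q := by ring
  rw [iterate_derivative_mul_X, h₂, iterate_derivative_sub, iterate_derivative_mul_X,
    iterate_derivative_mul_X, iterate_derivative_mul_X] at h₁
  simp only [Nat.add_sub_cancel, nsmul_eq_mul, Nat.cast_add, Nat.cast_one] at h₁
  linear_combination (norm := skip) h₁
  simp only [map_mul, map_add, map_natCast, map_ofNat, map_one]
  ring

end CommRing

theorem integral_eval_mul_eval_iterate_derivative_pow_eq_zero {p : ℝ[X]} {a b : ℝ}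
    (ha : p.IsRoot a) (hb : p.IsRoot b) {j m : ℕ} (hjm : j ≤ m) {w : ℝ[X]}
    (hw : derivative^[j] w = 0) :
    ∫ x in a..b, w.eval x * (derivative^[j] (p ^ m)).eval x = 0 := by
  induction j generalizing w with
  | zero => simp [show w = 0 from hw]
  | succ j ih =>
    rw [Function.iterate_succ_apply', intervalIntegral.integral_mul_deriv_eq_deriv_mul
      (fun x _ => w.hasDerivAt x) (fun x _ => (derivative^[j] (p ^ m)).hasDerivAt x)
      ((derivative w).continuous.intervalIntegrable _ _)
      ((derivative _).continuous.intervalIntegrable _ _),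
      eval_iterate_derivative_pow_eq_zero ha (by omega),
      eval_iterate_derivative_pow_eq_zero hb (by omega), ih (by omega) hw]
    simp

theorem eq_zero_of_integral_eval_eq_zero {r : ℝ[X]} {a b : ℝ} (hab : a < b)
    (hr : ∀ x ∈ Icc a b, 0 ≤ r.eval x) (h : ∫ x in a..b, r.eval x = 0) : r = 0 := by
  by_contra hr₀
  rw [intervalIntegral.integral_eq_zero_iff_of_le_of_nonneg_ae hab.le
    ((ae_restrict_iff' measurableSet_Ioc).2 (.of_forall fun x hx => hr x (Ioc_subset_Icc_self hx)))
    (r.continuous.intervalIntegrable _ _), Filter.EventuallyEq,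
    ae_restrict_iff' measurableSet_Ioc] at h
  have hroots : ∀ᵐ x, ¬ r.IsRoot x :=
    measure_eq_zero_iff_ae_notMem.1 ((r.finite_setOfPred_isRoot hr₀).measure_zero _)
  have : volume (Ioc a b) = 0 := measure_eq_zero_iff_ae_notMem.2 <| by
    filter_upwards [h, hroots] with x hx hx' using fun hmem => hx' (hx hmem)
  rw [Real.volume_Ioc, ENNReal.ofReal_eq_zero] at this
  linarith

end Polynomial

theorem le_max_of_mul_deriv_nonneg {f : ℝ → ℝ} (hf : Differentiable ℝ f)
    (hf' : ∀ x, 0 ≤ x * deriv f x) {a b x : ℝ} (ha : a ≤ 0) (hb : 0 ≤ b)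
    (hx : x ∈ Icc a b) :
    f x ≤ max (f a) (f b) := by
  rcases le_total x 0 with h | h
  · refine le_max_of_le_left <| antitoneOn_of_deriv_nonpos (convex_Icc a 0)
      hf.continuous.continuousOn hf.differentiableOn (fun y hy => ?_)
      ⟨le_rfl, ha⟩ ⟨hx.1, h⟩ hx.1
    rw [interior_Icc] at hy
    exact nonpos_of_mul_nonneg_right (hf' y) hy.2
  · refine le_max_of_le_right <| monotoneOn_of_deriv_nonneg (convex_Icc 0 b)
      hf.continuous.continuousOn hf.differentiableOn (fun y hy => ?_)
      ⟨h, hx.2⟩ ⟨hb, le_rfl⟩ hx.2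
    rw [interior_Icc] at hy
    exact nonneg_of_mul_nonneg_right (hf' y) hy.1

theorem natDegree_leg_le (m : ℕ) : (leg m).natDegree ≤ m := by
  refine (natDegree_C_mul_le _ _).trans <| (natDegree_iterate_derivative _ _).trans ?_
  have : ((X ^ 2 - 1 : ℝ[X]) ^ m).natDegree ≤ m * 2 :=
    natDegree_pow_le_of_le m (by compute_degree)
  omega

theorem derivative_leg_add_two (n : ℕ) :
    derivative (leg (n + 2)) = C (2 * n + 3 : ℝ) * leg (n + 1) + derivative (leg n) := by
  have hD : derivative^[n + 3] ((X ^ 2 - 1 : ℝ[X]) ^ (n + 2)) =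
      C (2 * (n + 2) * (2 * n + 3) : ℝ) * derivative^[n + 1] ((X ^ 2 - 1) ^ (n + 1)) +
        C (4 * (n + 1) * (n + 2) : ℝ) * derivative^[n + 1] ((X ^ 2 - 1) ^ n) := by
    rw [show n + 3 = n + 1 + 2 from rfl, Function.iterate_add_apply]
    rw [show derivative^[2] ((X ^ 2 - 1 : ℝ[X]) ^ (n + 2)) = derivative (derivative _) from rfl,
      derivative_derivative_X_sq_sub_one_pow, iterate_map_add, iterate_derivative_C_mul,
      iterate_derivative_C_mul]
  have hc₁ : ((2 : ℝ) ^ (n + 2) * (n + 2)!)⁻¹ * (2 * (n + 2) * (2 * n + 3)) =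
      (2 * n + 3) * ((2 : ℝ) ^ (n + 1) * (n + 1)!)⁻¹ := by
    push_cast [Nat.factorial_succ]
    field_simp
    ring
  have hc₂ : ((2 : ℝ) ^ (n + 2) * (n + 2)!)⁻¹ * (4 * (n + 1) * (n + 2)) =
      ((2 : ℝ) ^ n * n !)⁻¹ := by
    push_cast [Nat.factorial_succ]
    field_simp
    ring
  simp only [leg, derivative_C_mul, ← Function.iterate_succ_apply' derivative]
  rw [hD, mul_add, ← mul_assoc, ← mul_assoc, ← mul_assoc, ← C_mul, ← C_mul, ← C_mul, hc₁,
    hc₂]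

theorem eval_leg_of_sq_eq_one {t : ℝ} (ht : t ^ 2 = 1) (m : ℕ) : (leg m).eval t = t ^ m := by
  rw [leg, eval_mul, eval_C, eval_iterate_derivative_X_sq_sub_one_pow ht, mul_pow]
  field_simp

theorem integral_eval_mul_eval_leg_eq_zero {m : ℕ} {w : ℝ[X]} (hw : w.natDegree < m) :
    ∫ x in (-1 : ℝ)..1, w.eval x * (leg m).eval x = 0 := by
  simp only [leg, eval_mul, eval_C, mul_left_comm (w.eval _), intervalIntegral.integral_const_mul]
  rw [integral_eval_mul_eval_iterate_derivative_pow_eq_zero (by simp) (by simp) le_rfl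
    (iterate_derivative_eq_zero hw), mul_zero]

theorem leg_ode (m : ℕ) :
    (X ^ 2 - 1) * derivative (derivative (leg m)) + 2 * X * derivative (leg m) =
      C (m * (m + 1) : ℝ) * leg m := by
  simp only [leg, derivative_C_mul, ← Function.iterate_succ_apply' derivative]
  linear_combination
    C ((2 : ℝ) ^ m * m !)⁻¹ * X_sq_sub_one_mul_iterate_derivative_add_two (R := ℝ) m

theorem abs_eval_leg_le_one (m : ℕ) {x : ℝ} (hx : x ∈ Icc (-1 : ℝ) 1) :
    |(leg m).eval x| ≤ 1 := by
  rcases Nat.eq_zero_or_pos m with rfl | hm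
  · simp [leg]
  set L := leg m
  set M : ℝ := m * (m + 1)
  have hM : 0 < M := by positivity
  set H : ℝ[X] := C M * L ^ 2 + (1 - X ^ 2) * derivative L ^ 2
  have hH' : derivative H = 2 * X * derivative L ^ 2 := by
    simp only [H, derivative_add, derivative_mul, derivative_C, derivative_pow, derivative_sub,
      derivative_one, derivative_X, Nat.cast_ofNat, map_ofNat]
    linear_combination (-2 * derivative L) * leg_ode m
  have hH_end : ∀ t : ℝ, t ^ 2 = 1 → H.eval t = M := fun t ht => by
    simp only [H, L, eval_add, eval_mul, eval_C, eval_pow, eval_sub, eval_one, eval_X, ht,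
      eval_leg_of_sq_eq_one ht, sub_self, zero_mul, add_zero]
    rw [← pow_mul, mul_comm m 2, pow_mul, ht, one_pow, mul_one]
  have hHx : H.eval x ≤ M := by
    have := le_max_of_mul_deriv_nonneg H.differentiable (fun y => by
        rw [Polynomial.deriv, hH']
        simp only [eval_mul, eval_pow, eval_X, eval_ofNat]
        nlinarith [sq_nonneg y, sq_nonneg ((derivative L).eval y)])
      (by norm_num : (-1 : ℝ) ≤ 0) zero_le_one hx
    rwa [hH_end (-1) (by norm_num), hH_end 1 (by norm_num), max_self] at this
  have hLx : M * L.eval x ^ 2 ≤ H.eval x := by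
    have : 0 ≤ (1 - x ^ 2) * (derivative L).eval x ^ 2 := by
      have := sq_le_one_iff_abs_le_one x |>.2 (abs_le.2 hx)
      positivity
    simpa [H] using this
  rw [← sq_le_one_iff_abs_le_one]
  nlinarith

theorem eq_zero_of_isRoot_neg_one_of_forall_integral_mul_eq_zero {k : ℕ} {d : ℝ[X]}
    (hdeg : d.natDegree ≤ k) (hroot : d.IsRoot (-1))
    (horth : ∀ w : ℝ[X], w.natDegree + 1 ≤ k →
      ∫ s in (-1 : ℝ)..1, d.eval s * w.eval s = 0) :
    d = 0 := by
  set q := d /ₘ (X - C (-1))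
  have hd : (X - C (-1)) * q = d := mul_divByMonic_eq_iff_isRoot.2 hroot
  by_cases hq : q = 0
  · rw [← hd, hq, mul_zero]
  have hqdeg : q.natDegree + 1 ≤ k := by
    rwa [← hd, natDegree_mul (X_sub_C_ne_zero _) hq, natDegree_X_sub_C, add_comm] at hdeg
  have hsq : (X - C (-1)) * q * q = 0 := by
    refine eq_zero_of_integral_eval_eq_zero (by norm_num : (-1 : ℝ) < 1) (fun x hx => ?_) ?_
    · simp only [eval_mul, eval_sub, eval_X, eval_C, mul_assoc]
      exact mul_nonneg (by linarith [hx.1]) (mul_self_nonneg _)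
    · simpa only [hd, eval_mul] using horth q hqdeg
  exact absurd hsq (mul_ne_zero (mul_ne_zero (X_sub_C_ne_zero _) hq) hq)

theorem IsRadauPos.unique {k : ℕ} {v : ℝ → ℝ} (hv : IntervalIntegrable v volume (-1) 1)
    {p q : ℝ[X]} (hp : IsRadauPos k v p) (hq : IsRadauPos k v q) : p = q := by
  refine sub_eq_zero.1 (eq_zero_of_isRoot_neg_one_of_forall_integral_mul_eq_zero
    ((natDegree_sub_le _ _).trans (max_le hp.1 hq.1)) (by simp [IsRoot, hp.2.2, hq.2.2])
    fun w hw => ?_)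
  have hint (r : ℝ[X]) :
      IntervalIntegrable (fun s => (v s - r.eval s) * w.eval s) volume (-1) 1 :=
    (hv.sub (r.continuous.intervalIntegrable _ _)).mul_continuousOn
      w.continuous.continuousOn
  calc ∫ s in (-1 : ℝ)..1, (p - q).eval s * w.eval s
      = ∫ s in (-1 : ℝ)..1, (v s - q.eval s) * w.eval s - (v s - p.eval s) * w.eval s := by
        congr 1 with s
        rw [eval_sub]
        ring
    _ = 0 := by rw [intervalIntegral.integral_sub (hint q) (hint p), hq.2.1 w hw, hp.2.1 w hw,
        sub_self]

theorem dinv_eval_leg_succ (n : ℕ) :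
    Dinv (fun t => (leg (n + 1)).eval t) =
      fun s => (C (2 * n + 3 : ℝ)⁻¹ * (leg (n + 2) - leg n)).eval s := by
  set Q := C (2 * n + 3 : ℝ)⁻¹ * (leg (n + 2) - leg n)
  have hQ' : derivative Q = leg (n + 1) := by
    rw [derivative_C_mul, derivative_sub, derivative_leg_add_two, add_sub_cancel_right,
      ← mul_assoc, ← C_mul, inv_mul_cancel₀ (by positivity), C_1, one_mul]
  have hQ : Q.eval (-1) = 0 := by
    simp [Q, eval_leg_of_sq_eq_one, pow_succ]
  funext s
  rw [Dinv, ← hQ', intervalIntegral.integral_eq_sub_of_hasDerivAt (fun x _ => Q.hasDerivAt x)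
    ((derivative Q).continuous.intervalIntegrable _ _), hQ, sub_zero]

theorem isRadauPos_dinv_leg {k : ℕ} (hk : 1 ≤ k) :
    IsRadauPos k (Dinv fun t => (leg k).eval t)
      (-(1 / (2 * k + 1) : ℝ) • (leg k + leg (k - 1))) := by
  obtain ⟨n, rfl⟩ : ∃ n, k = n + 1 := ⟨k - 1, by omega⟩
  rw [dinv_eval_leg_succ, add_tsub_cancel_right]
  push_cast
  refine ⟨?_, fun w hw => ?_, ?_⟩
  · exact (natDegree_smul_le _ _).trans
      (natDegree_add_le_of_degree_le (natDegree_leg_le _) ((natDegree_leg_le _).trans (by omega)))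
  · have hpt : ∀ s, ((C (2 * n + 3 : ℝ)⁻¹ * (leg (n + 2) - leg n)).eval s -
          (-(1 / (2 * (n + 1) + 1) : ℝ) • (leg (n + 1) + leg n)).eval s) * w.eval s =
        (2 * n + 3 : ℝ)⁻¹ *
          (w.eval s * (leg (n + 2)).eval s + w.eval s * (leg (n + 1)).eval s) := by
      intro s
      simp only [eval_mul, eval_C, eval_sub, eval_smul, eval_add, smul_eq_mul]
      ring
    have hint (P : ℝ[X]) : IntervalIntegrable (fun s => w.eval s * P.eval s) volume (-1) 1 :=
      (w.continuous.mul P.continuous).intervalIntegrable _ _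
    rw [intervalIntegral.integral_congr fun s _ => hpt s, intervalIntegral.integral_const_mul,
      intervalIntegral.integral_add (hint _) (hint _),
      integral_eval_mul_eval_leg_eq_zero (by omega), integral_eval_mul_eval_leg_eq_zero (by omega),
      add_zero, mul_zero]
  · simp [eval_leg_of_sq_eq_one, pow_succ]

theorem F1_formula (k : ℕ) (hk : 1 ≤ k) (F₁ : Polynomial ℝ)
    (hF₁ : IsRadauPos k (Dinv fun t => (leg k).eval t) F₁) :
    F₁ = -(1 / (2 * k + 1) : ℝ) • (leg k + leg (k - 1)) ∧
    F₁.eval (-1) = 0 ∧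
    ∀ s ∈ Set.Icc (-1 : ℝ) 1, |F₁.eval s| ≤ 2 / (2 * k + 1) := by
  have hv : IntervalIntegrable (Dinv fun t => (leg k).eval t) volume (-1) 1 := by
    obtain ⟨n, rfl⟩ : ∃ n, k = n + 1 := ⟨k - 1, by omega⟩
    rw [dinv_eval_leg_succ]
    exact Polynomial.continuous _ |>.intervalIntegrable _ _
  have hF := hF₁.unique hv (isRadauPos_dinv_leg hk)
  refine ⟨hF, hF₁.2.2.trans intervalIntegral.integral_same, fun s hs => ?_⟩
  have hpos : (0 : ℝ) < 2 * k + 1 := by positivity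
  rw [hF, eval_smul, smul_eq_mul, abs_mul, abs_neg, abs_of_pos (by positivity), eval_add, one_div,
    inv_mul_le_iff₀ hpos, mul_div_cancel₀ _ hpos.ne']
  exact (abs_add_le _ _).trans <| by
    linarith [abs_eval_leg_le_one k hs, abs_eval_leg_le_one (k - 1) hs]
end

section
/- Let k ≥ 2 and define recursively F_{2,1} = P^- D^{-1} L_k and F_{2,i+1} = P^- D^{-1} P^+ D^{-1} F_{2,i}. Then for all 1 ≤ i ≤ ⌈k/2⌉ there exist real constants b_{i,m} such that F_{2,i} = Σ_{m=k-2i+2}^{k} b_{i,m} (L_m - L_{m-1}); in particular F_{2,i}(1) = 0. -/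
open Polynomial Finset

/-- Degree-`k` right Gauss–Radau projection on `[-1,1]`. -/
def IsRadauNeg (k : ℕ) (v : ℝ → ℝ) (p : Polynomial ℝ) : Prop :=
  p.natDegree ≤ k ∧
  (∀ w : Polynomial ℝ, w.natDegree + 1 ≤ k →
    ∫ s in (-1 : ℝ)..1, (v s - p.eval s) * w.eval s = 0) ∧
  p.eval 1 = v 1

/-!
Write `OrthDegreeLT c p` for the `L²(-1,1)`-orthogonality of `p` to all polynomials of
degree `< c`. If `OrthDegreeLT (c + 1) p`, then `D⁻¹ p` vanishes at both endpoints, so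
integration by parts against `D⁻¹ w` gives `OrthDegreeLT c (D⁻¹ p)`; both Radau
projections of degree `k` keep this orthogonality for `c ≤ k`, and `P⁻ D⁻¹ p` inherits
`D⁻¹ p (1) = 0`. Starting from `OrthDegreeLT k L_k` (Rodrigues' formula), each `D⁻¹`
costs one degree, so `F_{2,i}` is orthogonal to all polynomials of degree `≤ k - 2i` and
vanishes at `1`. In the Legendre expansion of `F_{2,i}` orthogonality kills `L_m` for
`m ≤ k - 2i`, the remaining coefficients sum to `F_{2,i}(1) = 0` because `L_m(1) = 1`,
and Abel summation turns the expansion into one in the differences `L_m - L_{m-1}`.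
-/

noncomputable def antideriv (p : ℝ[X]) : ℝ[X] :=
  ∑ n ∈ range (p.natDegree + 1), C (p.coeff n / (n + 1)) * (X ^ (n + 1) - C ((-1) ^ (n + 1)))

theorem derivative_antideriv (p : ℝ[X]) : derivative (antideriv p) = p := by
  conv_rhs => rw [p.as_sum_range' (p.natDegree + 1) (lt_add_one _)]
  refine (derivative_sum).trans (sum_congr rfl fun n _ => ?_)
  rw [derivative_C_mul, derivative_sub, derivative_C, sub_zero, derivative_X_pow,
    ← C_mul_X_pow_eq_monomial, ← mul_assoc, ← C_mul, Nat.add_sub_cancel]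
  congr 2
  push_cast
  field_simp

@[simp]
theorem antideriv_eval_neg_one (p : ℝ[X]) : (antideriv p).eval (-1) = 0 := by
  simp [antideriv, eval_finsetSum]

theorem natDegree_antideriv_le (p : ℝ[X]) : (antideriv p).natDegree ≤ p.natDegree + 1 := by
  refine natDegree_sum_le_of_forall_le _ _ fun n hn => (natDegree_C_mul_le _ _).trans ?_
  refine (natDegree_sub_le _ _).trans (max_le ?_ (by simp))
  rw [natDegree_X_pow]
  simpa [Nat.lt_succ_iff] using hn

theorem integral_eval_eq_sub_antideriv (p : ℝ[X]) (a b : ℝ) :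
    ∫ t in a..b, p.eval t = (antideriv p).eval b - (antideriv p).eval a := by
  refine intervalIntegral.integral_eq_sub_of_hasDerivAt (f := fun x => (antideriv p).eval x)
    (fun x _ => ?_) (p.continuous.intervalIntegrable _ _)
  simpa only [derivative_antideriv] using (antideriv p).hasDerivAt x

theorem Dinv_eval (p : ℝ[X]) : Dinv (fun t => p.eval t) = fun s => (antideriv p).eval s := by
  ext s
  rw [Dinv, integral_eval_eq_sub_antideriv, antideriv_eval_neg_one, sub_zero]

theorem integral_eval_mul_derivative_eval (p q : ℝ[X]) (a b : ℝ) :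
    ∫ s in a..b, p.eval s * (derivative q).eval s =
      p.eval b * q.eval b - p.eval a * q.eval a - ∫ s in a..b, (derivative p).eval s * q.eval s :=
  intervalIntegral.integral_mul_deriv_eq_deriv_mul (fun x _ => p.hasDerivAt x)
    (fun x _ => q.hasDerivAt x) ((Polynomial.continuous _).intervalIntegrable _ _)
    ((Polynomial.continuous _).intervalIntegrable _ _)

theorem integral_iterate_derivative_mul_eq {P : ℝ[X]} {n : ℕ}
    (hP : ∀ j < n, (derivative^[j] P).eval 1 = 0 ∧ (derivative^[j] P).eval (-1) = 0)
    (w : ℝ[X]) :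
    ∫ s in (-1 : ℝ)..1, (derivative^[n] P).eval s * w.eval s =
      (-1) ^ n * ∫ s in (-1 : ℝ)..1, P.eval s * (derivative^[n] w).eval s := by
  induction n generalizing w with
  | zero => simp
  | succ n ih =>
    obtain ⟨h1, h2⟩ := hP n n.lt_succ_self
    have hibp := integral_eval_mul_derivative_eval (derivative^[n] P) w (-1) 1
    have ih' := ih (fun j hj => hP j (hj.trans n.lt_succ_self)) (derivative w)
    rw [Function.iterate_succ_apply', Function.iterate_succ_apply, pow_succ]
    rw [h1, h2] at hibp
    linarith

theorem leg_eq (m : ℕ) :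
    leg m = C ((2 ^ m * m.factorial : ℝ)⁻¹) * derivative^[m] ((X ^ 2 - 1 : ℝ[X]) ^ m) := rfl

theorem eval_iterate_derivative_X_sq_sub_one_pow {m j : ℕ} (hj : j < m) {t : ℝ}
    (ht : t ^ 2 = 1) :
    (derivative^[j] ((X ^ 2 - 1 : ℝ[X]) ^ m)).eval t = 0 := by
  obtain ⟨q, hq⟩ := pow_sub_dvd_iterate_derivative_pow (X ^ 2 - 1 : ℝ[X]) m j
  simp [hq, ht, Nat.sub_ne_zero_of_lt hj]

theorem eval_one_iterate_derivative_X_sq_sub_one_pow (m : ℕ) :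
    (derivative^[m] ((X ^ 2 - 1 : ℝ[X]) ^ m)).eval 1 = 2 ^ m * m.factorial := by
  have hfactor : (X ^ 2 - 1 : ℝ[X]) ^ m = (X - C 1) ^ m * (X - C (-1)) ^ m := by
    rw [← mul_pow]; congr 1; simp only [map_one, map_neg]; ring
  rw [hfactor, iterate_derivative_mul, eval_finsetSum, sum_eq_single 0]
  · simp only [Nat.choose_zero_right, Nat.sub_zero, Function.iterate_zero_apply, one_smul,
      eval_mul, iterate_derivative_X_sub_pow_self, eval_natCast, eval_pow, eval_sub, eval_X,
      eval_C]
    norm_num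
    ring
  · intro i hi hi0
    rw [iterate_derivative_X_sub_pow]
    simp [Nat.sub_sub_self (mem_range_succ_iff.mp hi), hi0]
  · simp

theorem leg_eval_one (m : ℕ) : (leg m).eval 1 = 1 := by
  rw [leg_eq, eval_mul, eval_C, eval_one_iterate_derivative_X_sq_sub_one_pow]
  exact inv_mul_cancel₀ (by positivity)

theorem degree_leg (m : ℕ) : (leg m).degree = m := by
  have hR : (X ^ 2 - 1 : ℝ[X]) ^ m = (X ^ 2 - C 1) ^ m := by rw [map_one]
  have hmonic : ((X ^ 2 - 1 : ℝ[X]) ^ m).Monic := by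
    rw [hR]; exact (monic_X_pow_sub_C 1 two_ne_zero).pow m
  have hdeg : ((X ^ 2 - 1 : ℝ[X]) ^ m).natDegree = 2 * m := by
    rw [hR, natDegree_pow, natDegree_X_pow_sub_C, mul_comm]
  rw [leg_eq, degree_C_mul (inv_ne_zero (by positivity))]
  refine degree_eq_of_le_of_coeff_ne_zero (degree_le_of_natDegree_le ?_) ?_
  · have := natDegree_iterate_derivative ((X ^ 2 - 1 : ℝ[X]) ^ m) m
    rwa [hdeg, two_mul, Nat.add_sub_cancel] at this
  · rw [coeff_iterate_derivative, ← two_mul, ← hdeg, hmonic.coeff_natDegree, nsmul_one,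
      Nat.cast_ne_zero, hdeg, ne_eq, Nat.descFactorial_eq_zero_iff_lt]
    omega

noncomputable def legSequence : Polynomial.Sequence ℝ := ⟨leg, degree_leg⟩

theorem natDegree_leg (m : ℕ) : (leg m).natDegree = m := legSequence.natDegree_eq m

theorem leg_ne_zero (m : ℕ) : leg m ≠ 0 := legSequence.ne_zero m

def OrthDegreeLT (c : ℕ) (p : ℝ[X]) : Prop :=
  ∀ w : ℝ[X], w.natDegree < c → ∫ s in (-1 : ℝ)..1, p.eval s * w.eval s = 0

theorem orthDegreeLT_leg (m : ℕ) : OrthDegreeLT m (leg m) := by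
  intro w hw
  have hboundary (j : ℕ) (hj : j < m) :
      (derivative^[j] ((X ^ 2 - 1 : ℝ[X]) ^ m)).eval 1 = 0 ∧
        (derivative^[j] ((X ^ 2 - 1 : ℝ[X]) ^ m)).eval (-1) = 0 :=
    ⟨eval_iterate_derivative_X_sq_sub_one_pow hj (one_pow 2),
      eval_iterate_derivative_X_sq_sub_one_pow hj (by norm_num : (-1 : ℝ) ^ 2 = 1)⟩
  simp only [leg_eq, eval_mul, eval_C, mul_assoc, intervalIntegral.integral_const_mul,
    integral_iterate_derivative_mul_eq hboundary, iterate_derivative_eq_zero hw, eval_zero,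
    mul_zero, intervalIntegral.integral_zero]

theorem integral_eval_mul_self_pos {p : ℝ[X]} (hp : p ≠ 0) :
    0 < ∫ s in (-1 : ℝ)..1, p.eval s * p.eval s := by
  rw [intervalIntegral.integral_pos_iff_support_of_nonneg_ae
    (Filter.Eventually.of_forall fun s => mul_self_nonneg _)
    ((p.continuous.mul p.continuous).intervalIntegrable _ _)]
  refine ⟨by norm_num, ?_⟩
  have hroots : MeasureTheory.volume {x : ℝ | p.IsRoot x} = 0 :=
    (finite_setOfPred_isRoot hp).measure_zero _
  calc (0 : ENNReal) < MeasureTheory.volume (Set.Ioc (-1 : ℝ) 1 \ {x | p.IsRoot x}) := by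
        rw [MeasureTheory.measure_sdiff_null hroots, Real.volume_Ioc]; norm_num
    _ ≤ _ := MeasureTheory.measure_mono fun x hx =>
      Set.mem_inter (mul_self_ne_zero.mpr hx.2) hx.1

theorem exists_eq_sum_range_smul_leg {p : ℝ[X]} {K : ℕ} (hp : p.natDegree ≤ K) :
    ∃ c : ℕ → ℝ, p = ∑ m ∈ range (K + 1), c m • leg m := by
  have hspan : p ∈ Submodule.span ℝ (legSequence '' Set.Iic K) := by
    rw [legSequence.span_degreeLE fun i _ => (leadingCoeff_ne_zero.mpr (leg_ne_zero i)).isUnit,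
      mem_degreeLE]
    exact degree_le_of_natDegree_le hp
  obtain ⟨l, hl, rfl⟩ := (Finsupp.mem_span_image_iff_linearCombination ℝ).1 hspan
  refine ⟨l, (Finsupp.linearCombination_apply ℝ l).trans
    (Finsupp.sum_of_support_subset l (fun m hm => ?_) _ fun _ _ => zero_smul _ _)⟩
  simpa [Nat.lt_succ_iff] using hl hm

theorem integral_leg_mul_leg_of_ne {m j : ℕ} (h : m ≠ j) :
    ∫ s in (-1 : ℝ)..1, (leg m).eval s * (leg j).eval s = 0 := by
  rcases h.lt_or_gt with hlt | hgt
  · simp only [mul_comm ((leg m).eval _)]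
    exact orthDegreeLT_leg j (leg m) (by rwa [natDegree_leg])
  · exact orthDegreeLT_leg m (leg j) (by rwa [natDegree_leg])

theorem integral_sum_smul_leg_mul_leg (s : Finset ℕ) (c : ℕ → ℝ) {j : ℕ} (hj : j ∈ s) :
    ∫ x in (-1 : ℝ)..1, (∑ m ∈ s, c m • leg m).eval x * (leg j).eval x =
      c j * ∫ x in (-1 : ℝ)..1, (leg j).eval x * (leg j).eval x := by
  simp only [eval_finsetSum, eval_smul, smul_eq_mul, sum_mul, mul_assoc]
  rw [intervalIntegral.integral_finsetSum fun m _ =>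
    (Continuous.intervalIntegrable (by fun_prop) _ _)]
  simp only [intervalIntegral.integral_const_mul]
  exact sum_eq_single_of_mem j hj fun m _ hmj => by rw [integral_leg_mul_leg_of_ne hmj, mul_zero]

theorem exists_eq_sum_Icc_smul_leg {p : ℝ[X]} {r K : ℕ} (hp : p.natDegree ≤ K)
    (horth : OrthDegreeLT r p) : ∃ c : ℕ → ℝ, p = ∑ m ∈ Icc r K, c m • leg m := by
  obtain ⟨c, rfl⟩ := exists_eq_sum_range_smul_leg hp
  have hlow (j : ℕ) (hj : j ∈ range (K + 1)) (hjr : j < r) : c j = 0 := by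
    have h := horth (leg j) (by rwa [natDegree_leg])
    rw [integral_sum_smul_leg_mul_leg _ _ hj] at h
    exact (mul_eq_zero.mp h).resolve_right (integral_eval_mul_self_pos (leg_ne_zero j)).ne'
  refine ⟨c, (sum_subset (fun m hm => ?_) fun m hm hmr => ?_).symm⟩
  · simp only [mem_Icc, mem_range] at hm ⊢; omega
  · rw [hlow m hm (by simp only [mem_Icc, mem_range] at hm hmr; omega), zero_smul]

theorem Finset.sum_Icc_smul_eq_sub_sum_smul_sub {R M : Type*} [Ring R] [AddCommGroup M]
    [Module R M] (c : ℕ → R) (f : ℕ → M) (r K : ℕ) :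
    ∑ m ∈ Icc r K, c m • f m = (∑ j ∈ Icc r K, c j) • f K -
      ∑ m ∈ Icc (r + 1) K, (∑ j ∈ Icc r (m - 1), c j) • (f m - f (m - 1)) := by
  rcases lt_or_ge K r with hK | hK
  · simp [Icc_eq_empty_of_lt hK, Icc_eq_empty_of_lt (hK.trans r.lt_succ_self)]
  induction K, hK using Nat.le_induction with
  | base => simp
  | succ K hrK ih =>
    rw [sum_Icc_succ_top (by omega), sum_Icc_succ_top (by omega), sum_Icc_succ_top (by omega), ih,
      Nat.add_sub_cancel, add_smul, smul_sub]
    abel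

theorem exists_eq_sum_smul_leg_sub_leg {p : ℝ[X]} {r K : ℕ} (hp : p.natDegree ≤ K)
    (horth : OrthDegreeLT r p) (hp1 : p.eval 1 = 0) :
    ∃ b : ℕ → ℝ, p = ∑ m ∈ Icc (r + 1) K, b m • (leg m - leg (m - 1)) := by
  obtain ⟨c, rfl⟩ := exists_eq_sum_Icc_smul_leg hp horth
  have hsum : ∑ j ∈ Icc r K, c j = 0 := by
    simpa only [eval_finsetSum, eval_smul, leg_eval_one, smul_eq_mul, mul_one] using hp1
  refine ⟨fun m => -∑ j ∈ Icc r (m - 1), c j, ?_⟩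
  rw [sum_Icc_smul_eq_sub_sum_smul_sub, hsum, zero_smul, zero_sub, ← sum_neg_distrib]
  simp only [neg_smul]

section Orthogonality

variable {c k : ℕ} {p q : ℝ[X]}

theorem OrthDegreeLT.mono {c' : ℕ} (h : c' ≤ c) (hp : OrthDegreeLT c p) : OrthDegreeLT c' p :=
  fun w hw => hp w (hw.trans_le h)

theorem OrthDegreeLT.eval_one_antideriv (hc : 0 < c) (hp : OrthDegreeLT c p) :
    (antideriv p).eval 1 = 0 := by
  have h := hp 1 (by simpa using hc)
  rw [← sub_zero ((antideriv p).eval 1), ← antideriv_eval_neg_one p,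
    ← integral_eval_eq_sub_antideriv]
  simpa using h

theorem OrthDegreeLT.orthDegreeLT_antideriv (hp : OrthDegreeLT (c + 1) p) :
    OrthDegreeLT c (antideriv p) := by
  intro w hw
  have hibp := integral_eval_mul_derivative_eval (antideriv p) (antideriv w) (-1) 1
  have hw' : (antideriv w).natDegree < c + 1 := (natDegree_antideriv_le w).trans_lt (by omega)
  rw [derivative_antideriv, derivative_antideriv, hp.eval_one_antideriv c.succ_pos,
    antideriv_eval_neg_one, hp _ hw'] at hibp
  simpa using hibp

theorem OrthDegreeLT.of_integral_sub_mul_eq_zero (hp : OrthDegreeLT c p) (hc : c ≤ k)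
    (h : ∀ w : ℝ[X], w.natDegree + 1 ≤ k →
      ∫ s in (-1 : ℝ)..1, (p.eval s - q.eval s) * w.eval s = 0) :
    OrthDegreeLT c q := by
  intro w hw
  have hpq := h w (hw.trans_le hc)
  simp only [sub_mul] at hpq
  rw [intervalIntegral.integral_sub (Continuous.intervalIntegrable (by fun_prop) _ _)
    (Continuous.intervalIntegrable (by fun_prop) _ _), hp w hw] at hpq
  linarith

theorem IsRadauNeg.orthDegreeLT (hc : c ≤ k) (hp : OrthDegreeLT (c + 1) p)
    (hq : IsRadauNeg k (Dinv fun t => p.eval t) q) : OrthDegreeLT c q ∧ q.eval 1 = 0 := by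
  rw [Dinv_eval] at hq
  obtain ⟨-, horth, hq1⟩ := hq
  exact ⟨hp.orthDegreeLT_antideriv.of_integral_sub_mul_eq_zero hc horth,
    hq1.trans (hp.eval_one_antideriv c.succ_pos)⟩

theorem IsRadauPos.orthDegreeLT (hc : c ≤ k) (hp : OrthDegreeLT (c + 1) p)
    (hq : IsRadauPos k (Dinv fun t => p.eval t) q) : OrthDegreeLT c q := by
  rw [Dinv_eval] at hq
  exact hp.orthDegreeLT_antideriv.of_integral_sub_mul_eq_zero hc hq.2.1

end Orthogonality

theorem F2i_representation_general (k : ℕ) (F G : ℕ → Polynomial ℝ)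
    (hF1 : IsRadauNeg k (Dinv fun t => (leg k).eval t) (F 1))
    (hG : ∀ i, IsRadauPos k (Dinv fun t => (F i).eval t) (G i))
    (hFsucc : ∀ i, IsRadauNeg k (Dinv fun t => (G i).eval t) (F (i + 1))) :
    ∀ i, 1 ≤ i → i ≤ (k + 1) / 2 →
      (∃ b : ℕ → ℝ, F i = ∑ m ∈ Finset.Icc (k + 2 - 2 * i) k, b m • (leg m - leg (m - 1))) ∧
      (F i).eval 1 = 0 := by
  have hinv (i : ℕ) (hi : 1 ≤ i) : 2 * i ≤ k + 1 →
      (F i).natDegree ≤ k ∧ OrthDegreeLT (k + 1 - 2 * i) (F i) ∧ (F i).eval 1 = 0 := by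
    induction i, hi using Nat.le_induction with
    | base =>
      exact fun _ => ⟨hF1.1, hF1.orthDegreeLT (by omega) ((orthDegreeLT_leg k).mono (by omega))⟩
    | succ i hi ih =>
      intro hik
      have hGi : OrthDegreeLT (k + 1 - 2 * (i + 1) + 1) (G i) :=
        (hG i).orthDegreeLT (by omega) ((ih (by omega)).2.1.mono (by omega))
      exact ⟨(hFsucc i).1, (hFsucc i).orthDegreeLT (by omega) hGi⟩
  intro i hi hik
  obtain ⟨hdeg, horth, hFi1⟩ := hinv i hi (by omega)
  rw [show k + 2 - 2 * i = k + 1 - 2 * i + 1 by omega]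
  exact ⟨exists_eq_sum_smul_leg_sub_leg hdeg horth hFi1, hFi1⟩

/-- Structure of the correction functions `F_{2,i} = (P⁻D⁻¹P⁺D⁻¹)^{i-1} P⁻D⁻¹ L_k`. -/
theorem F2i_representation (k : ℕ) (hk : 2 ≤ k) (F G : ℕ → Polynomial ℝ)
    (hF1 : IsRadauNeg k (Dinv fun t => (leg k).eval t) (F 1))
    (hG : ∀ i, IsRadauPos k (Dinv fun t => (F i).eval t) (G i))
    (hFsucc : ∀ i, IsRadauNeg k (Dinv fun t => (G i).eval t) (F (i + 1))) :
    ∀ i, 1 ≤ i → i ≤ (k + 1) / 2 →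
      (∃ b : ℕ → ℝ, F i = ∑ m ∈ Finset.Icc (k + 2 - 2 * i) k, b m • (leg m - leg (m - 1))) ∧
      (F i).eval 1 = 0 :=
  F2i_representation_general k F G hF1 hG hFsucc
end

section
/- Let F and \bar F be polynomials of degree ≤ k on [-1,1] with \bar F = P^- D^{-1} F, and suppose D^{-1}F vanishes at both endpoints s = ±1. Then for every polynomial v of degree ≤ k, ∫_{-1}^1 \bar F v' ds + ∫_{-1}^1 F v ds = 0. -/
/-! Integrating by parts, `∫ F v = -∫ (D⁻¹F) v'` because `D⁻¹F` vanishes at `±1`; and since `v'`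
has degree `≤ k - 1`, the Radau orthogonality lets `D⁻¹F` be replaced by its projection `F̄`. -/

open Polynomial

theorem hasDerivAt_Dinv {f : ℝ → ℝ} (hf : Continuous f) (x : ℝ) :
    HasDerivAt (Dinv f) (f x) x :=
  intervalIntegral.integral_hasDerivAt_right (hf.intervalIntegrable _ _)
    (hf.stronglyMeasurableAtFilter _ _) hf.continuousAt

theorem continuous_Dinv {f : ℝ → ℝ} (hf : Continuous f) : Continuous (Dinv f) :=
  continuous_iff_continuousAt.2 fun x => (hasDerivAt_Dinv hf x).continuousAt

theorem integral_Dinv_mul_derivative {f : ℝ → ℝ} (hf : Continuous f) (v : ℝ[X]) :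
    ∫ s in (-1 : ℝ)..1, Dinv f s * (derivative v).eval s =
      Dinv f 1 * v.eval 1 - Dinv f (-1) * v.eval (-1) - ∫ s in (-1 : ℝ)..1, f s * v.eval s :=
  intervalIntegral.integral_mul_deriv_eq_deriv_mul (fun x _ => hasDerivAt_Dinv hf x)
    (fun x _ => v.hasDerivAt x) (hf.intervalIntegrable _ _)
    ((derivative v).continuous.intervalIntegrable _ _)

theorem natDegree_derivative_add_one_le {v : ℝ[X]} (hv : derivative v ≠ 0) :
    (derivative v).natDegree + 1 ≤ v.natDegree := by
  have hv₀ : v.natDegree ≠ 0 := fun h => hv (derivative_of_natDegree_zero h)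
  exact natDegree_derivative_lt hv₀

theorem IsRadauNeg.integral_mul_derivative_eq {k : ℕ} {g : ℝ → ℝ} {p : ℝ[X]}
    (h : IsRadauNeg k g p) (hg : IntervalIntegrable g MeasureTheory.volume (-1) 1)
    {v : ℝ[X]} (hv : v.natDegree ≤ k) :
    ∫ s in (-1 : ℝ)..1, p.eval s * (derivative v).eval s =
      ∫ s in (-1 : ℝ)..1, g s * (derivative v).eval s := by
  have horth : ∫ s in (-1 : ℝ)..1, (g s - p.eval s) * (derivative v).eval s = 0 := by
    by_cases hv' : derivative v = 0
    · simp [hv']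
    · exact h.2.1 _ ((natDegree_derivative_add_one_le hv').trans hv)
  have hgv := hg.mul_continuousOn (derivative v).continuous.continuousOn
  have hpv := ((p * derivative v).continuous.intervalIntegrable (μ := MeasureTheory.volume) (-1) 1)
  simp only [sub_mul] at horth
  rw [intervalIntegral.integral_sub hgv (by simpa using hpv), sub_eq_zero] at horth
  exact horth.symm

theorem cancellation_mechanism_general (k : ℕ) (F barF : Polynomial ℝ)
    (hproj : IsRadauNeg k (Dinv fun t => F.eval t) barF)
    (hleft : Dinv (fun t => F.eval t) (-1) = 0)
    (hright : Dinv (fun t => F.eval t) 1 = 0)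
    (v : Polynomial ℝ) (hv : v.natDegree ≤ k) :
    (∫ s in (-1 : ℝ)..1, barF.eval s * (Polynomial.derivative v).eval s) +
      ∫ s in (-1 : ℝ)..1, F.eval s * v.eval s = 0 := by
  have hFc : Continuous fun t => F.eval t := F.continuous
  rw [hproj.integral_mul_derivative_eq ((continuous_Dinv hFc).intervalIntegrable _ _) hv,
    integral_Dinv_mul_derivative hFc, hleft, hright]
  ring

/-- Key cancellation: if `F̄ = P⁻D⁻¹F` and `D⁻¹F` vanishes at both endpoints, then
`∫ F̄ v' + ∫ F v = 0` for every polynomial `v` of degree ≤ k. -/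
theorem cancellation_mechanism (k : ℕ) (F barF : Polynomial ℝ)
    (hFdeg : F.natDegree ≤ k) (hbarFdeg : barF.natDegree ≤ k)
    (hproj : IsRadauNeg k (Dinv fun t => F.eval t) barF)
    (hleft : Dinv (fun t => F.eval t) (-1) = 0)
    (hright : Dinv (fun t => F.eval t) 1 = 0)
    (v : Polynomial ℝ) (hv : v.natDegree ≤ k) :
    (∫ s in (-1 : ℝ)..1, barF.eval s * (Polynomial.derivative v).eval s) +
      ∫ s in (-1 : ℝ)..1, F.eval s * v.eval s = 0 :=
  cancellation_mechanism_general k F barF hproj hleft hright v hv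
end
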